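/- Let Ψ be a maximal closed root subsystem of Φ (of any rank). The map that sends a ℚ-linear map t : Span_ℚ(Ψ) → ℂ to the point x ∈ (ℙ¹)^{Φ⁺} with x_λ = [1 : t(λ)] for λ ∈ Ψ ∩ Φ⁺ and x_λ = ∞ for λ ∈ Φ⁺ ∖ Ψ takes values in Z and is a bijection from Hom_ℚ(Span_ℚ(Ψ), ℂ) onto the stratum C̊(Ψ) := {x ∈ Z : Fin(x) = Ψ ∩ Φ⁺}. (Thus each stratum of Z is an affine space of dimension equal to the rank of Ψ.) -/

import Mathlib

open scoped Classical
noncomputable section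

/-- A reduced crystallographic root system spanning `E`. -/
def IsRootSystem {E : Type*} [AddCommGroup E] [Module ℚ E] (Φ : Set E) : Prop :=
  Φ.Finite ∧ (0 : E) ∉ Φ ∧ Submodule.span ℚ Φ = ⊤ ∧ (∀ α ∈ Φ, -α ∈ Φ) ∧
    (∀ α ∈ Φ, ∃ f : E →ₗ[ℚ] ℚ, f α = 2 ∧ (∀ β ∈ Φ, ∃ n : ℤ, f β = (n : ℚ)) ∧
      ∀ β ∈ Φ, β - f β • α ∈ Φ) ∧
    ∀ α ∈ Φ, ∀ c : ℚ, c • α ∈ Φ → c = 1 ∨ c = -1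

/-- Canonical homogeneous coordinates on `ℙ¹ = ℂ ∪ {∞}`. -/
def coordP1 : OnePoint ℂ → ℂ × ℂ :=
  fun x => Option.elim x (0, 1) fun c => (1, c)

/-- Membership in `Z`. -/
def memZ {E : Type*} [AddCommGroup E] [Module ℚ E] (Φpos : Finset E)
    (x : Φpos → OnePoint ℂ) : Prop :=
  ∀ c : Φpos → ℚ, ∑ l : Φpos, c l • (l : E) = 0 →
    ∑ l ∈ Finset.univ.filter fun l : Φpos => c l ≠ 0,
      (c l : ℂ) * (coordP1 (x l)).2 *
        ∏ m ∈ (Finset.univ.filter fun m : Φpos => c m ≠ 0).erase l, (coordP1 (x m)).1 = 0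

/-- The embedding of the Cartan subalgebra `Hom_ℚ(E, ℂ)` into `(ℙ¹)^{Φ⁺}`. -/
def embH {E : Type*} [AddCommGroup E] [Module ℚ E] (Φpos : Finset E)
    (f : E →ₗ[ℚ] ℂ) : Φpos → OnePoint ℂ :=
  fun l => ((f (l : E) : ℂ) : OnePoint ℂ)

/-- `Ψ` is a closed root subsystem of `Θ`. -/
def IsClosedSub {E : Type*} [AddCommGroup E] (Θ Ψ : Set E) : Prop :=
  Ψ ⊆ Θ ∧ (∀ l ∈ Ψ, -l ∈ Ψ) ∧ ∀ l ∈ Ψ, ∀ m ∈ Ψ, l + m ∈ Θ → l + m ∈ Ψ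

/-- The rank of a subset: the dimension of its `ℚ`-linear span. -/
def rankOf {E : Type*} [AddCommGroup E] [Module ℚ E] (Ψ : Set E) : ℕ :=
  Module.finrank ℚ (Submodule.span ℚ Ψ)

/-- `Ψ` is a maximal closed root subsystem of `Θ` of rank `m`. -/
def IsMaxClosedOfRank {E : Type*} [AddCommGroup E] [Module ℚ E] (Θ Ψ : Set E) (m : ℕ) : Prop :=
  IsClosedSub Θ Ψ ∧ rankOf Ψ = m ∧
    ∀ Ψ' : Set E, IsClosedSub Θ Ψ' → rankOf Ψ' = m → Ψ ⊆ Ψ' → Ψ' = Ψ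


/-- `Fin(x)`: the set of positive roots where `x` has a finite coordinate. -/
def finSet {E : Type*} [AddCommGroup E] [Module ℚ E] (Φpos : Finset E)
    (x : Φpos → OnePoint ℂ) : Set E :=
  {l : E | ∃ h : l ∈ Φpos, x ⟨l, h⟩ ≠ OnePoint.infty}

/-- The parametrization of the stratum attached to `Ψ`: a `ℚ`-linear map
`t : Span_ℚ(Ψ) → ℂ` goes to the point whose `λ`-coordinate is `[1 : t(λ)]` for
`λ ∈ Ψ ∩ Φ⁺` and `∞` for `λ ∈ Φ⁺ \ Ψ`. -/
def strMap {E : Type*} [AddCommGroup E] [Module ℚ E] (Φpos : Finset E) (Ψ : Set E)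
    (t : (Submodule.span ℚ Ψ) →ₗ[ℚ] ℂ) : Φpos → OnePoint ℂ :=
  fun l => if h : (l : E) ∈ Ψ then
      ((t ⟨(l : E), Submodule.subset_span h⟩ : ℂ) : OnePoint ℂ)
    else OnePoint.infty

/-! Maximality makes `Ψ` saturated: `Φ ∩ Span(Ψ)` is closed, has the rank of `Ψ` and contains
`Ψ`, so it is `Ψ`. Take a relation `∑ c_λ λ = 0`. If two roots of its support lie outside `Ψ`,
every monomial of the corresponding equation contains a vanishing coordinate `x_{μ,0}`; exactly
one root outside `Ψ` would lie in `Span(Ψ)`, contradicting saturation; and if there is none, the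
equation reads `t(∑ c_λ λ) = 0`. Conversely, on the stratum the equations of the relations
supported on `Ψ ∩ Φ⁺` say that `λ ↦ x_λ` respects every linear relation among these roots, so it
is the restriction of a linear map. Injectivity holds because `Ψ = -Ψ`, so `Ψ ∩ Φ⁺` already
spans `Span(Ψ)`. -/

open Finset

theorem Finset.sum_mul_prod_erase_eq_zero {ι R : Type*} [CommSemiring R] [DecidableEq ι]
    (s : Finset ι) (a g : ι → R) {i j : ι} (hi : i ∈ s) (hj : j ∈ s) (hij : i ≠ j)
    (hgi : g i = 0) (hgj : g j = 0) : ∑ l ∈ s, a l * ∏ m ∈ s.erase l, g m = 0 := by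
  refine sum_eq_zero fun l _ => ?_
  by_cases hil : i = l
  · subst hil
    rw [prod_eq_zero (mem_erase.2 ⟨hij.symm, hj⟩) hgj, mul_zero]
  · rw [prod_eq_zero (mem_erase.2 ⟨hil, hi⟩) hgi, mul_zero]

theorem Submodule.mem_span_of_sum_smul_eq_zero {ι K M : Type*} [Fintype ι] [Field K]
    [AddCommGroup M] [Module K M] {v : ι → M} {c : ι → K} (hc : ∑ i, c i • v i = 0)
    {s : Set M} {i : ι} (hi : c i ≠ 0) (hs : ∀ j ≠ i, c j ≠ 0 → v j ∈ s) :
    v i ∈ Submodule.span K s := by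
  classical
  have hci : c i • v i = -∑ j ∈ univ.erase i, c j • v j := by
    rw [eq_neg_iff_add_eq_zero, add_sum_erase univ (fun j => c j • v j) (mem_univ i), hc]
  refine (Submodule.smul_mem_iff _ hi).1 ?_
  rw [hci]
  refine Submodule.neg_mem _ (Submodule.sum_mem _ fun j hj => ?_)
  by_cases hcj : c j = 0
  · simp [hcj]
  · exact Submodule.smul_mem _ _ (Submodule.subset_span (hs j (ne_of_mem_erase hj) hcj))

theorem exists_linearMap_apply_eq_of_relations {ι K M N : Type*} [Fintype ι] [Field K]
    [AddCommGroup M] [Module K M] [AddCommGroup N] [Module K N] (b : ι → M) (w : ι → N)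
    (h : ∀ c : ι → K, ∑ i, c i • b i = 0 → ∑ i, c i • w i = 0) :
    ∃ f : M →ₗ[K] N, ∀ i, f (b i) = w i := by
  classical
  set A := Fintype.linearCombination K b
  set W := Fintype.linearCombination K w
  have hker : LinearMap.ker A ≤ LinearMap.ker W := fun c hc => h c hc
  obtain ⟨f, hf⟩ := LinearMap.exists_extend
    ((LinearMap.ker A).liftQ W hker ∘ₗ A.quotKerEquivRange.symm.toLinearMap)
  refine ⟨f, fun i => ?_⟩
  have hAi : A (Pi.single i 1) = b i := by simp [A]
  have := LinearMap.congr_fun hf ⟨A (Pi.single i 1), LinearMap.mem_range_self _ _⟩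
  simp only [LinearMap.comp_apply, Submodule.subtype_apply, LinearEquiv.coe_coe,
    LinearMap.quotKerEquivRange_symm_apply_image] at this
  rw [← hAi, this]
  simp [W]

theorem exists_linearMap_apply_eq_on_of_relations {ι K M N : Type*} [Fintype ι] [Field K]
    [AddCommGroup M] [Module K M] [AddCommGroup N] [Module K N] (s : Set ι) (b : ι → M)
    (w : ι → N) (h : ∀ c : ι → K, (∀ i ∉ s, c i = 0) → ∑ i, c i • b i = 0 → ∑ i, c i • w i = 0) :
    ∃ f : M →ₗ[K] N, ∀ i ∈ s, f (b i) = w i := by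
  classical
  obtain ⟨f, hf⟩ := exists_linearMap_apply_eq_of_relations (K := K) (s.indicator b)
    (s.indicator w) fun c hc => by
      have hsupp : ∀ i ∉ s, (if i ∈ s then c i else 0) = 0 := fun i hi => if_neg hi
      simpa [Set.indicator_apply, smul_ite] using
        h _ hsupp (by simpa [Set.indicator_apply, smul_ite] using hc)
  exact ⟨f, fun i hi => by simpa [Set.indicator_of_mem hi] using hf i⟩

@[simp]
theorem coordP1_coe (z : ℂ) : coordP1 z = (1, z) := rfl

@[simp]
theorem coordP1_infty : coordP1 OnePoint.infty = (0, 1) := rfl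

section RelationForm

variable {E : Type*} (Φpos : Finset E)

def relationForm (c : Φpos → ℚ) (x : Φpos → OnePoint ℂ) : ℂ :=
  ∑ l ∈ univ.filter fun l => c l ≠ 0,
    (c l : ℂ) * (coordP1 (x l)).2 * ∏ m ∈ (univ.filter fun m => c m ≠ 0).erase l, (coordP1 (x m)).1

variable {Φpos}

theorem relationForm_eq_zero_of_infty {c : Φpos → ℚ} {x : Φpos → OnePoint ℂ} {i j : Φpos}
    (hij : i ≠ j) (hci : c i ≠ 0) (hcj : c j ≠ 0) (hxi : x i = OnePoint.infty)
    (hxj : x j = OnePoint.infty) : relationForm Φpos c x = 0 :=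
  sum_mul_prod_erase_eq_zero _ _ _ (mem_filter.2 ⟨mem_univ i, hci⟩)
    (mem_filter.2 ⟨mem_univ j, hcj⟩) hij (by simp [hxi]) (by simp [hxj])

theorem relationForm_eq_sum {c : Φpos → ℚ} {x : Φpos → OnePoint ℂ}
    (hx : ∀ l, c l ≠ 0 → x l ≠ OnePoint.infty) :
    relationForm Φpos c x = ∑ l, c l • (coordP1 (x l)).2 := by
  trans ∑ l ∈ univ.filter fun l => c l ≠ 0, c l • (coordP1 (x l)).2
  · refine sum_congr rfl fun l _ => ?_
    rw [prod_eq_one fun m hm => ?_, mul_one, Rat.smul_def]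
    obtain ⟨z, hz⟩ := OnePoint.ne_infty_iff_exists.1 (hx m (mem_filter.1 (mem_of_mem_erase hm)).2)
    simp [← hz]
  · exact sum_filter_of_ne fun l _ hl hcl => hl (by simp [hcl])

end RelationForm

section Stratum

variable {E : Type*} [AddCommGroup E] [Module ℚ E] {Φpos : Finset E}

theorem memZ_iff {x : Φpos → OnePoint ℂ} :
    memZ Φpos x ↔ ∀ c : Φpos → ℚ, ∑ l, c l • (l : E) = 0 → relationForm Φpos c x = 0 :=
  Iff.rfl

theorem coe_mem_finSet_iff {x : Φpos → OnePoint ℂ} {l : Φpos} :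
    (l : E) ∈ finSet Φpos x ↔ x l ≠ OnePoint.infty :=
  ⟨fun ⟨_, h⟩ => h, fun h => ⟨l.2, h⟩⟩

variable {Ψ : Set E}

theorem strMap_of_mem (t : Submodule.span ℚ Ψ →ₗ[ℚ] ℂ) {l : Φpos} (hl : (l : E) ∈ Ψ) :
    strMap Φpos Ψ t l = t ⟨l, Submodule.subset_span hl⟩ :=
  dif_pos hl

theorem strMap_of_notMem (t : Submodule.span ℚ Ψ →ₗ[ℚ] ℂ) {l : Φpos} (hl : (l : E) ∉ Ψ) :
    strMap Φpos Ψ t l = OnePoint.infty :=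
  dif_neg hl

theorem strMap_comp_subtype_of_mem (f : E →ₗ[ℚ] ℂ) {l : Φpos} (hl : (l : E) ∈ Ψ) :
    strMap Φpos Ψ (f ∘ₗ (Submodule.span ℚ Ψ).subtype) l = f l :=
  dif_pos hl

theorem finSet_strMap (t : Submodule.span ℚ Ψ →ₗ[ℚ] ℂ) :
    finSet Φpos (strMap Φpos Ψ t) = Ψ ∩ Φpos := by
  ext a
  refine ⟨fun ⟨ha, hne⟩ => ⟨?_, ha⟩, fun ⟨hΨ, ha⟩ => ⟨ha, ?_⟩⟩
  · by_contra haΨ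
    exact hne (strMap_of_notMem t haΨ)
  · rw [strMap_of_mem t hΨ]
    exact OnePoint.coe_ne_infty _

theorem memZ_strMap (hsat : ∀ l ∈ Φpos, l ∈ Submodule.span ℚ Ψ → l ∈ Ψ)
    (t : Submodule.span ℚ Ψ →ₗ[ℚ] ℂ) : memZ Φpos (strMap Φpos Ψ t) := by
  obtain ⟨f, rfl⟩ := LinearMap.exists_extend t
  refine memZ_iff.2 fun c hc => ?_
  by_cases htwo : ∃ i j, i ≠ j ∧ c i ≠ 0 ∧ c j ≠ 0 ∧ (i : E) ∉ Ψ ∧ (j : E) ∉ Ψ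
  · obtain ⟨i, j, hij, hci, hcj, hi, hj⟩ := htwo
    exact relationForm_eq_zero_of_infty hij hci hcj (strMap_of_notMem _ hi)
      (strMap_of_notMem _ hj)
  have hsupp : ∀ l, c l ≠ 0 → (l : E) ∈ Ψ := by
    intro i hci
    by_contra hi
    refine hi (hsat _ i.2 (Submodule.mem_span_of_sum_smul_eq_zero hc hci fun j hji hcj => ?_))
    by_contra hj
    exact htwo ⟨i, j, hji.symm, hci, hcj, hi, hj⟩
  rw [relationForm_eq_sum fun l hl => ?_]
  · calc ∑ l, c l • (coordP1 (strMap Φpos Ψ (f ∘ₗ _) l)).2 = ∑ l, c l • f l :=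
          sum_congr rfl fun l _ => by
            by_cases hcl : c l = 0
            · simp [hcl]
            · simp [strMap_comp_subtype_of_mem f (hsupp l hcl)]
      _ = f (∑ l, c l • (l : E)) := by simp only [map_sum, map_smul]
      _ = 0 := by rw [hc, map_zero]
  · rw [strMap_comp_subtype_of_mem f (hsupp l hl)]
    exact OnePoint.coe_ne_infty _

theorem strMap_injective (hneg : ∀ ψ ∈ Ψ, -ψ ∈ Ψ) (hsign : ∀ ψ ∈ Ψ, ψ ∉ Φpos → -ψ ∈ Φpos) :
    Function.Injective (strMap Φpos Ψ) := by
  intro t t' h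
  have hpos : ∀ y : Submodule.span ℚ Ψ, (y : E) ∈ Ψ → (y : E) ∈ Φpos → t y = t' y := by
    intro y hyΨ hy
    have := congrFun h ⟨y, hy⟩
    rw [strMap_of_mem t hyΨ, strMap_of_mem t' hyΨ] at this
    exact OnePoint.coe_injective this
  refine LinearMap.ext_on Submodule.span_span_coe_preimage fun y (hy : (y : E) ∈ Ψ) => ?_
  by_cases hyp : (y : E) ∈ Φpos
  · exact hpos y hy hyp
  · simpa using hpos (-y) (hneg _ hy) (hsign _ hy hyp)

theorem exists_strMap_eq {x : Φpos → OnePoint ℂ} (hx : memZ Φpos x)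
    (hfin : finSet Φpos x = Ψ ∩ Φpos) : ∃ t, strMap Φpos Ψ t = x := by
  have hΨ : ∀ l : Φpos, (l : E) ∈ Ψ ↔ x l ≠ OnePoint.infty := fun l => by
    rw [← coe_mem_finSet_iff, hfin]
    simp
  obtain ⟨f, hf⟩ := exists_linearMap_apply_eq_on_of_relations (K := ℚ) {l : Φpos | (l : E) ∈ Ψ}
    (fun l : Φpos => (l : E)) (fun l => (coordP1 (x l)).2) fun c hc hrel => by
      rw [← relationForm_eq_sum fun l hl => (hΨ l).1 (not_not.1 (mt (hc l) hl))]
      exact hx c hrel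
  refine ⟨f ∘ₗ (Submodule.span ℚ Ψ).subtype, funext fun l => ?_⟩
  by_cases hl : (l : E) ∈ Ψ
  · obtain ⟨z, hz⟩ := OnePoint.ne_infty_iff_exists.1 ((hΨ l).1 hl)
    rw [strMap_comp_subtype_of_mem f hl, hf l hl, ← hz]
    rfl
  · rw [strMap_of_notMem _ hl]
    exact (not_not.1 (mt (hΨ l).2 hl)).symm

end Stratum

section ClosedSubsystems

variable {E : Type*} [AddCommGroup E] [Module ℚ E]

theorem isClosedSub_inter_submodule {Θ : Set E} (hneg : ∀ α ∈ Θ, -α ∈ Θ) (p : Submodule ℚ E) :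
    IsClosedSub Θ (Θ ∩ p) :=
  ⟨Set.inter_subset_left, fun _ hl => ⟨hneg _ hl.1, p.neg_mem hl.2⟩,
    fun _ hl _ hm hlm => ⟨hlm, p.add_mem hl.2 hm.2⟩⟩

theorem span_inter_span_eq {Θ Ψ : Set E} (hΨ : Ψ ⊆ Θ) :
    Submodule.span ℚ (Θ ∩ Submodule.span ℚ Ψ) = Submodule.span ℚ Ψ :=
  le_antisymm (Submodule.span_le.2 Set.inter_subset_right)
    (Submodule.span_mono fun _ hψ => ⟨hΨ hψ, Submodule.subset_span hψ⟩)

theorem IsMaxClosedOfRank.inter_span_eq {Θ Ψ : Set E} (hΨ : IsMaxClosedOfRank Θ Ψ (rankOf Ψ))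
    (hneg : ∀ α ∈ Θ, -α ∈ Θ) : Θ ∩ Submodule.span ℚ Ψ = Ψ :=
  hΨ.2.2 _ (isClosedSub_inter_submodule hneg _)
    (by rw [rankOf, rankOf, span_inter_span_eq hΨ.1.1])
    fun _ hψ => ⟨hΨ.1.1 hψ, Submodule.subset_span hψ⟩

theorem neg_mem_of_notMem_pos {Φ : Set E} {ℓ : E →ₗ[ℚ] ℚ} {Φpos : Finset E}
    (hneg : ∀ α ∈ Φ, -α ∈ Φ) (hℓ : ∀ α ∈ Φ, ℓ α ≠ 0) (hpos : ∀ a, a ∈ Φpos ↔ a ∈ Φ ∧ 0 < ℓ a)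
    {α : E} (hα : α ∈ Φ) (h : α ∉ Φpos) : -α ∈ Φpos := by
  have : ℓ α < 0 := lt_of_le_of_ne (not_lt.1 fun hlt => h ((hpos α).2 ⟨hα, hlt⟩)) (hℓ α hα)
  exact (hpos _).2 ⟨hneg α hα, by simpa using this⟩

end ClosedSubsystems

theorem statement5_general {E : Type*} [AddCommGroup E] [Module ℚ E]
    (Φ : Set E) (hΦ : IsRootSystem Φ)
    (ℓ : E →ₗ[ℚ] ℚ) (hℓ : ∀ α ∈ Φ, ℓ α ≠ 0)
    (Φpos : Finset E) (hpos : ∀ a : E, a ∈ Φpos ↔ a ∈ Φ ∧ 0 < ℓ a)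
    (Ψ : Set E) (hΨ : IsMaxClosedOfRank Φ Ψ (rankOf Ψ)) :
    (∀ t : (Submodule.span ℚ Ψ) →ₗ[ℚ] ℂ, memZ Φpos (strMap Φpos Ψ t)) ∧
    Function.Injective (strMap Φpos Ψ) ∧
    Set.range (strMap Φpos Ψ)
      = {x : Φpos → OnePoint ℂ | memZ Φpos x ∧ finSet Φpos x = Ψ ∩ (Φpos : Set E)} := by
  have hneg : ∀ α ∈ Φ, -α ∈ Φ := hΦ.2.2.2.1
  have hsat : ∀ l ∈ Φpos, l ∈ Submodule.span ℚ Ψ → l ∈ Ψ := fun l hl hspan =>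
    (hΨ.inter_span_eq hneg).subset ⟨((hpos l).1 hl).1, hspan⟩
  refine ⟨memZ_strMap hsat, strMap_injective hΨ.1.2.1 fun ψ hψ =>
    neg_mem_of_notMem_pos hneg hℓ hpos (hΨ.1.1 hψ), ?_⟩
  ext x
  refine ⟨?_, fun ⟨hx, hfin⟩ => exists_strMap_eq hx hfin⟩
  rintro ⟨t, rfl⟩
  exact ⟨memZ_strMap hsat t, finSet_strMap t⟩

theorem statement5 {E : Type*} [AddCommGroup E] [Module ℚ E] [FiniteDimensional ℚ E]
    (hr : 1 ≤ Module.finrank ℚ E)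
    (Φ : Set E) (hΦ : IsRootSystem Φ)
    (ℓ : E →ₗ[ℚ] ℚ) (hℓ : ∀ α ∈ Φ, ℓ α ≠ 0)
    (Φpos : Finset E) (hpos : ∀ a : E, a ∈ Φpos ↔ a ∈ Φ ∧ 0 < ℓ a)
    (Ψ : Set E) (hΨ : IsMaxClosedOfRank Φ Ψ (rankOf Ψ)) :
    (∀ t : (Submodule.span ℚ Ψ) →ₗ[ℚ] ℂ, memZ Φpos (strMap Φpos Ψ t)) ∧
    Function.Injective (strMap Φpos Ψ) ∧
    Set.range (strMap Φpos Ψ)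
      = {x : Φpos → OnePoint ℂ | memZ Φpos x ∧ finSet Φpos x = Ψ ∩ (Φpos : Set E)} :=
  statement5_general Φ hΦ ℓ hℓ Φpos hpos Ψ hΨ
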